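/- arXiv:2603.09812 — 3 statements merged into one kernel-verified Lean document; each statement's English description precedes it below -/
import Mathlib

section
/- Let k < 0, a > 0 and 0 < r₀ < 1/√(−k). Then the integral ∫_{r₀}^{x} 2a/(1 + k·r²) dr tends to +∞ as x tends to 1/√(−k) from the left; equivalently, the function r ↦ 2a/(1 + k·r²) is not Lebesgue integrable on the interval [r₀, 1/√(−k)). -/
open Filter Topology Real MeasureTheory

/-- For `k < 0`, `a > 0` and `0 < r₀ < 1/√(−k)`, the integral
`∫_{r₀}^{x} 2a/(1 + k r²) dr` tends to `+∞` as `x → (1/√(−k))⁻`; equivalently,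
`r ↦ 2a/(1 + k r²)` is not Lebesgue integrable on `[r₀, 1/√(−k))`. -/
theorem stmt_2 (k a r₀ : ℝ) (hk : k < 0) (ha : 0 < a)
    (hr₀ : 0 < r₀) (hr₀' : r₀ < 1 / Real.sqrt (-k)) :
    Tendsto (fun x : ℝ => ∫ r in r₀..x, 2 * a / (1 + k * r ^ 2))
        (𝓝[<] (1 / Real.sqrt (-k))) atTop ∧
      ¬ IntegrableOn (fun r : ℝ => 2 * a / (1 + k * r ^ 2))
        (Set.Ico r₀ (1 / Real.sqrt (-k))) := by
  set s := Real.sqrt (-k) with hs_def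
  have hs : 0 < s := Real.sqrt_pos.mpr (by linarith)
  have hks : s ^ 2 = -k := Real.sq_sqrt (by linarith)
  set b := 1 / s with hb_def
  have hb : 0 < b := by positivity
  have hbs : s * b = 1 := by rw [hb_def]; field_simp
  -- key positivity of denominator
  have hden : ∀ r : ℝ, r₀ ≤ r → r < b → 0 < 1 - s * r := by
    intro r h1 h2
    have : s * r < s * b := by
      exact mul_lt_mul_of_pos_left h2 hs
    rw [hbs] at this; linarith
  have hfac : ∀ r : ℝ, 1 + k * r ^ 2 = (1 - s * r) * (1 + s * r) := by
    intro r
    have : k = -(s ^ 2) := by linarith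
    rw [this]; ring
  have hdenpos : ∀ r : ℝ, r₀ ≤ r → r < b → 0 < 1 + k * r ^ 2 := by
    intro r h1 h2
    rw [hfac]
    have h0 : 0 < 1 - s * r := hden r h1 h2
    have h3 : 0 < 1 + s * r := by nlinarith
    exact mul_pos h0 h3
  set f : ℝ → ℝ := fun r => 2 * a / (1 + k * r ^ 2) with hf_def
  set g : ℝ → ℝ := fun r => a / (1 - s * r) with hg_def
  -- g ≤ f on the relevant range
  have hgf : ∀ r : ℝ, r₀ ≤ r → r < b → g r ≤ f r := by
    intro r h1 h2
    have h0 : 0 < 1 - s * r := hden r h1 h2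
    have hsr : 0 ≤ s * r := (mul_pos hs (lt_of_lt_of_le hr₀ h1)).le
    have h3 : (1 - s * r) * (1 + s * r) ≤ (1 - s * r) * 2 := by nlinarith
    have hc : 0 < (1 - s * r) * (1 + s * r) := by nlinarith
    have h4 : 2 * a / ((1 - s * r) * 2) ≤ 2 * a / ((1 - s * r) * (1 + s * r)) :=
      div_le_div_of_nonneg_left (by positivity) hc h3
    have h5 : 2 * a / ((1 - s * r) * 2) = a / (1 - s * r) := by
      field_simp
    simp only [hg_def, hf_def, hfac r]
    rw [← h5]; exact h4
  -- continuity-based integrability on [r₀, x] for x < b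
  have hfint : ∀ x : ℝ, r₀ ≤ x → x < b → IntervalIntegrable f volume r₀ x := by
    intro x h1 h2
    apply ContinuousOn.intervalIntegrable
    apply ContinuousOn.div continuousOn_const
    · fun_prop
    · intro r hr
      rw [Set.uIcc_of_le h1] at hr
      exact (hdenpos r hr.1 (lt_of_le_of_lt hr.2 h2)).ne'
  have hgint : ∀ x : ℝ, r₀ ≤ x → x < b → IntervalIntegrable g volume r₀ x := by
    intro x h1 h2
    apply ContinuousOn.intervalIntegrable
    apply ContinuousOn.div continuousOn_const
    · fun_prop
    · intro r hr
      rw [Set.uIcc_of_le h1] at hr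
      exact (hden r hr.1 (lt_of_le_of_lt hr.2 h2)).ne'
  -- explicit value of ∫ g
  have hgval : ∀ x : ℝ, r₀ ≤ x → x < b →
      (∫ r in r₀..x, g r) =
        (-(a / s) * Real.log (1 - s * x)) - (-(a / s) * Real.log (1 - s * r₀)) := by
    intro x h1 h2
    apply intervalIntegral.integral_eq_sub_of_hasDerivAt
    · intro t ht
      rw [Set.uIcc_of_le h1] at ht
      have h0 : 0 < 1 - s * t := hden t ht.1 (lt_of_le_of_lt ht.2 h2)
      have hinner : HasDerivAt (fun y : ℝ => 1 - s * y) (-s) t := by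
        simpa using ((hasDerivAt_id t).const_mul s).const_sub 1
      have hlog : HasDerivAt (fun y : ℝ => Real.log (1 - s * y))
          ((1 - s * t)⁻¹ * (-s)) t := by
          have := (Real.hasDerivAt_log h0.ne').comp t hinner; exact this
      have := hlog.const_mul (-(a / s))
      convert this using 1
      show a / (1 - s * t) = _
      field_simp [hg_def]
      rfl
    · exact hgint x h1 h2
  -- lower bound function tends to atTop
  set L : ℝ → ℝ := fun x =>
    (-(a / s) * Real.log (1 - s * x)) - (-(a / s) * Real.log (1 - s * r₀)) with hL_def
  have hLtop : Tendsto L (𝓝[<] b) atTop := by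
    have h1 : Tendsto (fun x : ℝ => 1 - s * x) (𝓝[<] b) (𝓝[>] 0) := by
      rw [tendsto_nhdsWithin_iff]
      constructor
      · have : Tendsto (fun x : ℝ => 1 - s * x) (𝓝 b) (𝓝 (1 - s * b)) :=
          (continuous_const.sub (continuous_const.mul continuous_id)).tendsto b
        rw [hbs] at this
        simpa using this.mono_left nhdsWithin_le_nhds
      · filter_upwards [self_mem_nhdsWithin] with x hx
        have : s * x < s * b := mul_lt_mul_of_pos_left hx hs
        rw [hbs] at this
        exact Set.mem_Ioi.mpr (by linarith)
    have h2 : Tendsto (fun x : ℝ => Real.log (1 - s * x)) (𝓝[<] b) atBot :=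
      Real.tendsto_log_nhdsGT_zero.comp h1
    have h3 : Tendsto (fun x : ℝ => -Real.log (1 - s * x)) (𝓝[<] b) atTop :=
      tendsto_neg_atBot_atTop.comp h2
    have h4 : Tendsto (fun x : ℝ => (a / s) * (-Real.log (1 - s * x))) (𝓝[<] b) atTop :=
      h3.const_mul_atTop (by positivity)
    have h5 := tendsto_atTop_add_const_right _ (-(-(a / s) * Real.log (1 - s * r₀))) h4
    apply h5.congr
    intro x
    simp only [hL_def]
    ring
  -- part 1: the interval integral tends to atTop
  have hev : L ≤ᶠ[𝓝[<] b] fun x : ℝ => ∫ r in r₀..x, f r := by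
    filter_upwards [Ioo_mem_nhdsLT_of_mem (Set.mem_Ioc.mpr ⟨hr₀', le_refl b⟩)] with x hx
    have h1 : r₀ ≤ x := hx.1.le
    have h2 : x < b := hx.2
    simp only [hL_def]
    rw [← hgval x h1 h2]
    exact intervalIntegral.integral_mono_on h1 (hgint x h1 h2) (hfint x h1 h2)
      (fun r hr => hgf r hr.1 (lt_of_le_of_lt hr.2 h2))
  have htop : Tendsto (fun x : ℝ => ∫ r in r₀..x, f r) (𝓝[<] b) atTop :=
    tendsto_atTop_mono' _ hev hLtop
  refine ⟨htop, ?_⟩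
  -- part 2: non-integrability
  intro H
  set C : ℝ := ∫ r in Set.Ico r₀ b, f r with hC_def
  have hbound : ∀ᶠ x in 𝓝[<] b, (∫ r in r₀..x, f r) ≤ C := by
    filter_upwards [Ioo_mem_nhdsLT_of_mem (Set.mem_Ioc.mpr ⟨hr₀', le_refl b⟩)] with x hx
    have h1 : r₀ ≤ x := hx.1.le
    have h2 : x < b := hx.2
    rw [intervalIntegral.integral_of_le h1]
    apply setIntegral_mono_set H
    · filter_upwards [ae_restrict_mem measurableSet_Ico] with r hr
      exact (div_pos (by positivity) (hdenpos r hr.1 hr.2)).le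
    · apply HasSubset.Subset.eventuallyLE
      intro r hr
      exact ⟨hr.1.le, lt_of_le_of_lt hr.2 h2⟩
  have hgt : ∀ᶠ x in 𝓝[<] b, C < ∫ r in r₀..x, f r :=
    htop.eventually (eventually_gt_atTop C)
  obtain ⟨x, hx1, hx2⟩ := (hbound.and hgt).exists
  linarith
end

section
/- For every k ≠ 0 and every r ∈ ℝ, the function k ↦ S_k(r) is twice differentiable at k with second derivative ∂²_k S_k(r) = 3·(S_k(r) − r·C_k(r))/(4k²) − r²·S_k(r)/(4k). -/
open Filter Topology Real

/-- `S_k(r)`: `sin(√k r)/√k` if `k > 0`, `r` if `k = 0`,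
`sinh(√(−k) r)/√(−k)` if `k < 0`. -/
noncomputable def Sk (k r : ℝ) : ℝ :=
  if 0 < k then Real.sin (Real.sqrt k * r) / Real.sqrt k
  else if k = 0 then r
  else Real.sinh (Real.sqrt (-k) * r) / Real.sqrt (-k)

/-- `C_k(r)`: `cos(√k r)` if `k > 0`, `1` if `k = 0`, `cosh(√(−k) r)` if `k < 0`. -/
noncomputable def Ck (k r : ℝ) : ℝ :=
  if 0 < k then Real.cos (Real.sqrt k * r)
  else if k = 0 then 1
  else Real.cosh (Real.sqrt (-k) * r)

lemma Sk_pos {k : ℝ} (h : 0 < k) (r : ℝ) :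
    Sk k r = Real.sin (Real.sqrt k * r) / Real.sqrt k := by simp [Sk, h]

lemma Sk_neg {k : ℝ} (h : k < 0) (r : ℝ) :
    Sk k r = Real.sinh (Real.sqrt (-k) * r) / Real.sqrt (-k) := by
  simp [Sk, not_lt.2 h.le, h.ne]

lemma Ck_pos {k : ℝ} (h : 0 < k) (r : ℝ) :
    Ck k r = Real.cos (Real.sqrt k * r) := by simp [Ck, h]

lemma Ck_neg {k : ℝ} (h : k < 0) (r : ℝ) :
    Ck k r = Real.cosh (Real.sqrt (-k) * r) := by
  simp [Ck, not_lt.2 h.le, h.ne]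

lemma Sk_hasDeriv (r : ℝ) {k : ℝ} (hk : k ≠ 0) :
    HasDerivAt (fun k' : ℝ => Sk k' r) ((r * Ck k r - Sk k r) / (2 * k)) k := by
  rcases hk.lt_or_gt with hneg | hpos
  · set s := Real.sqrt (-k) with hs
    have hs0 : 0 < s := Real.sqrt_pos.2 (by linarith)
    have hsq : s ^ 2 = -k := Real.sq_sqrt (by linarith)
    have h1 : HasDerivAt (fun k' : ℝ => Real.sqrt (-k')) (1 / (2 * s) * (-1)) k := by
      exact (Real.hasDerivAt_sqrt (by simpa using hk)).comp k (hasDerivAt_neg k)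
    have h2 : HasDerivAt (fun u : ℝ => Real.sinh (u * r) / u)
        ((Real.cosh (s * r) * r * s - Real.sinh (s * r) * 1) / s ^ 2) s := by
      have := ((Real.hasDerivAt_sinh (s * r)).comp s
        ((hasDerivAt_id s).mul_const r)).div (hasDerivAt_id s) hs0.ne'
      simpa [Function.comp_def, Pi.div_def] using this
    have h3 := h2.comp k h1
    have heq : (fun k' : ℝ => Sk k' r)
        =ᶠ[nhds k] (fun k' : ℝ => Real.sinh (Real.sqrt (-k') * r) / Real.sqrt (-k')) := by
      filter_upwards [Iio_mem_nhds hneg] with x hx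
      exact Sk_neg hx r
    have h4 : HasDerivAt (fun k' : ℝ => Sk k' r)
        ((Real.cosh (s * r) * r * s - Real.sinh (s * r) * 1) / s ^ 2 * (1 / (2 * s) * (-1))) k :=
      (h3 :).congr_of_eventuallyEq heq
    convert h4 using 1
    rw [Sk_neg hneg, Ck_neg hneg, ← hs]
    have hkeq : k = -s ^ 2 := by linarith
    rw [hkeq]
    field_simp
  · set s := Real.sqrt k with hs
    have hs0 : 0 < s := Real.sqrt_pos.2 hpos
    have hsq : s ^ 2 = k := Real.sq_sqrt hpos.le
    have h1 : HasDerivAt (fun k' : ℝ => Real.sqrt k') (1 / (2 * s)) k :=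
      Real.hasDerivAt_sqrt hk
    have h2 : HasDerivAt (fun u : ℝ => Real.sin (u * r) / u)
        ((Real.cos (s * r) * r * s - Real.sin (s * r) * 1) / s ^ 2) s := by
      have := ((Real.hasDerivAt_sin (s * r)).comp s
        ((hasDerivAt_id s).mul_const r)).div (hasDerivAt_id s) hs0.ne'
      simpa [Function.comp_def, Pi.div_def] using this
    have h3 := h2.comp k h1
    have heq : (fun k' : ℝ => Sk k' r)
        =ᶠ[nhds k] (fun k' : ℝ => Real.sin (Real.sqrt k' * r) / Real.sqrt k') := by
      filter_upwards [Ioi_mem_nhds hpos] with x hx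
      exact Sk_pos hx r
    have h4 : HasDerivAt (fun k' : ℝ => Sk k' r)
        ((Real.cos (s * r) * r * s - Real.sin (s * r) * 1) / s ^ 2 * (1 / (2 * s))) k :=
      (h3 :).congr_of_eventuallyEq heq
    convert h4 using 1
    rw [Sk_pos hpos, Ck_pos hpos, ← hs]
    have hkeq : k = s ^ 2 := hsq.symm
    rw [hkeq]
    field_simp

lemma Ck_hasDeriv (r : ℝ) {k : ℝ} (hk : k ≠ 0) :
    HasDerivAt (fun k' : ℝ => Ck k' r) (-(r / 2) * Sk k r) k := by
  rcases hk.lt_or_gt with hneg | hpos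
  · set s := Real.sqrt (-k) with hs
    have hs0 : 0 < s := Real.sqrt_pos.2 (by linarith)
    have h1 : HasDerivAt (fun k' : ℝ => Real.sqrt (-k')) (1 / (2 * s) * (-1)) k :=
      (Real.hasDerivAt_sqrt (by simpa using hk)).comp k (hasDerivAt_neg k)
    have h2 : HasDerivAt (fun u : ℝ => Real.cosh (u * r)) (Real.sinh (s * r) * r) s := by
      have := (Real.hasDerivAt_cosh (s * r)).comp s ((hasDerivAt_id s).mul_const r)
      simpa [Function.comp_def, Pi.div_def] using this
    have h3 := h2.comp k h1
    have heq : (fun k' : ℝ => Ck k' r)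
        =ᶠ[nhds k] (fun k' : ℝ => Real.cosh (Real.sqrt (-k') * r)) := by
      filter_upwards [Iio_mem_nhds hneg] with x hx
      exact Ck_neg hx r
    have h4 : HasDerivAt (fun k' : ℝ => Ck k' r)
        (Real.sinh (s * r) * r * (1 / (2 * s) * (-1))) k :=
      (h3 :).congr_of_eventuallyEq heq
    convert h4 using 1
    rw [Sk_neg hneg, ← hs]
    field_simp
  · set s := Real.sqrt k with hs
    have hs0 : 0 < s := Real.sqrt_pos.2 hpos
    have h1 : HasDerivAt (fun k' : ℝ => Real.sqrt k') (1 / (2 * s)) k :=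
      Real.hasDerivAt_sqrt hk
    have h2 : HasDerivAt (fun u : ℝ => Real.cos (u * r)) (-Real.sin (s * r) * r) s := by
      have := (Real.hasDerivAt_cos (s * r)).comp s ((hasDerivAt_id s).mul_const r)
      simpa [Function.comp_def, Pi.div_def] using this
    have h3 := h2.comp k h1
    have heq : (fun k' : ℝ => Ck k' r)
        =ᶠ[nhds k] (fun k' : ℝ => Real.cos (Real.sqrt k' * r)) := by
      filter_upwards [Ioi_mem_nhds hpos] with x hx
      exact Ck_pos hx r
    have h4 : HasDerivAt (fun k' : ℝ => Ck k' r)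
        (-Real.sin (s * r) * r * (1 / (2 * s))) k :=
      (h3 :).congr_of_eventuallyEq heq
    convert h4 using 1
    rw [Sk_pos hpos, ← hs]
    field_simp

/-- For `k ≠ 0` and `r ∈ ℝ`, the function `k ↦ S_k(r)` is twice
differentiable at `k`, with second derivative
`∂²_k S_k(r) = 3 (S_k(r) − r C_k(r))/(4k²) − r² S_k(r)/(4k)`. -/
theorem stmt_10 (k : ℝ) (hk : k ≠ 0) (r : ℝ) :
    DifferentiableAt ℝ (fun k' : ℝ => Sk k' r) k ∧
      HasDerivAt (deriv (fun k' : ℝ => Sk k' r))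
        (3 * (Sk k r - r * Ck k r) / (4 * k ^ 2) - r ^ 2 * Sk k r / (4 * k)) k := by
  refine ⟨(Sk_hasDeriv r hk).differentiableAt, ?_⟩
  have heq : deriv (fun k' : ℝ => Sk k' r)
      =ᶠ[nhds k] (fun k' : ℝ => (r * Ck k' r - Sk k' r) / (2 * k')) := by
    filter_upwards [compl_singleton_mem_nhds hk] with x hx
    exact (Sk_hasDeriv r hx).deriv
  have hg : HasDerivAt (fun k' : ℝ => (r * Ck k' r - Sk k' r) / (2 * k'))
      (((r * (-(r / 2) * Sk k r) - (r * Ck k r - Sk k r) / (2 * k)) * (2 * k)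
        - (r * Ck k r - Sk k r) * 2) / (2 * k) ^ 2) k := by
    have hden : HasDerivAt (fun k' : ℝ => 2 * k') 2 k := by
      simpa using (hasDerivAt_id k).const_mul 2
    exact ((((Ck_hasDeriv r hk).const_mul r).sub (Sk_hasDeriv r hk)).div
      hden (by simp [hk]))
  have := hg.congr_of_eventuallyEq heq
  convert this using 1
  · rfl
  · rfl
  field_simp
  ring
end

section
/- For every k > 0, the eight functions of r on the interval (0, π/√k) given by r⁴, r³·C_k(r)·S_k(r), r²·S_k(r)², r⁴·S_k(r)², r·C_k(r)·S_k(r)³, r³·C_k(r)·S_k(r)³, S_k(r)⁴, and r²·S_k(r)⁴, are linearly independent over ℝ in the vector space of real-valued functions on (0, π/√k). -/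
private lemma analyticAt_rsin (s x : ℝ) : AnalyticAt ℝ (fun r : ℝ => Real.sin (s * r)) x := by
  have h1 : AnalyticAt ℂ Complex.sin ((s * x : ℝ) : ℂ) := Complex.differentiable_sin.analyticAt _
  have h3 : AnalyticAt ℝ (fun t : ℝ => (Complex.sin t).re) (s * x) :=
    (Complex.reCLM.analyticAt _).comp
      ((h1.restrictScalars).comp (Complex.ofRealCLM.analyticAt _))
  have h4 : AnalyticAt ℝ Real.sin (s * x) := by
    have : Real.sin = fun t : ℝ => (Complex.sin t).re := by
      funext t; rw [Complex.sin_ofReal_re]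
    rw [this]; exact h3
  exact h4.comp (analyticAt_const.mul analyticAt_id)

private lemma analyticAt_rcos (s x : ℝ) : AnalyticAt ℝ (fun r : ℝ => Real.cos (s * r)) x := by
  have h1 : AnalyticAt ℂ Complex.cos ((s * x : ℝ) : ℂ) := Complex.differentiable_cos.analyticAt _
  have h3 : AnalyticAt ℝ (fun t : ℝ => (Complex.cos t).re) (s * x) :=
    (Complex.reCLM.analyticAt _).comp
      ((h1.restrictScalars).comp (Complex.ofRealCLM.analyticAt _))
  have h4 : AnalyticAt ℝ Real.cos (s * x) := by
    have : Real.cos = fun t : ℝ => (Complex.cos t).re := by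
      funext t; rw [Complex.cos_ofReal_re]
    rw [this]; exact h3
  exact h4.comp (analyticAt_const.mul analyticAt_id)

/-- A real quartic polynomial vanishing at five points of an arithmetic progression
with nonzero step has all coefficients zero. -/
private lemma quartic_coeffs (A B C D E r P : ℝ) (hP : P ≠ 0)
    (h0 : A * r ^ 4 + B * r ^ 3 + C * r ^ 2 + D * r + E = 0)
    (h1 : A * (r + P) ^ 4 + B * (r + P) ^ 3 + C * (r + P) ^ 2 + D * (r + P) + E = 0)
    (h2 : A * (r + 2 * P) ^ 4 + B * (r + 2 * P) ^ 3 + C * (r + 2 * P) ^ 2 + D * (r + 2 * P) + E = 0)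
    (h3 : A * (r + 3 * P) ^ 4 + B * (r + 3 * P) ^ 3 + C * (r + 3 * P) ^ 2 + D * (r + 3 * P) + E = 0)
    (h4 : A * (r + 4 * P) ^ 4 + B * (r + 4 * P) ^ 3 + C * (r + 4 * P) ^ 2 + D * (r + 4 * P) + E = 0) :
    A = 0 ∧ B = 0 ∧ C = 0 ∧ D = 0 ∧ E = 0 := by
  have hP4 : (24 : ℝ) * P ^ 4 ≠ 0 := mul_ne_zero (by norm_num) (pow_ne_zero _ hP)
  have hP3 : (6 : ℝ) * P ^ 3 ≠ 0 := mul_ne_zero (by norm_num) (pow_ne_zero _ hP)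
  have hP2 : (2 : ℝ) * P ^ 2 ≠ 0 := mul_ne_zero (by norm_num) (pow_ne_zero _ hP)
  have hA : A = 0 := by
    have h : 24 * P ^ 4 * A = 0 := by linear_combination h4 - 4 * h3 + 6 * h2 - 4 * h1 + h0
    exact (mul_eq_zero.mp h).resolve_left hP4
  have hB : B = 0 := by
    have h : 6 * P ^ 3 * B = 0 := by
      linear_combination h3 - 3 * h2 + 3 * h1 - h0 - (24 * P ^ 3 * r + 36 * P ^ 4) * hA
    exact (mul_eq_zero.mp h).resolve_left hP3
  have hC : C = 0 := by
    have h : 2 * P ^ 2 * C = 0 := by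
      linear_combination h2 - 2 * h1 + h0 - (12 * P ^ 2 * r ^ 2 + 24 * P ^ 3 * r + 14 * P ^ 4) * hA
        - (6 * P ^ 2 * r + 6 * P ^ 3) * hB
    exact (mul_eq_zero.mp h).resolve_left hP2
  have hD : D = 0 := by
    have h : P * D = 0 := by
      linear_combination h1 - h0 - (4 * P * r ^ 3 + 6 * P ^ 2 * r ^ 2 + 4 * P ^ 3 * r + P ^ 4) * hA
        - (3 * P * r ^ 2 + 3 * P ^ 2 * r + P ^ 3) * hB - (2 * P * r + P ^ 2) * hC
    exact (mul_eq_zero.mp h).resolve_left hP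
  have hE : E = 0 := by
    linear_combination h0 - r ^ 4 * hA - r ^ 3 * hB - r ^ 2 * hC - r * hD
  exact ⟨hA, hB, hC, hD, hE⟩

/-- Key lemma: if a combination of the eight basic functions vanishes on all of `ℝ`,
then all coefficients vanish. -/
private lemma key_lemma (c0 c1 c2 c3 c4 c5 c6 c7 s : ℝ) (hs : s ≠ 0)
    (hF : ∀ r : ℝ,
      c0 * r ^ 4 + c1 * (r ^ 3 * Real.cos (s * r) * Real.sin (s * r))
        + c2 * (r ^ 2 * Real.sin (s * r) ^ 2) + c3 * (r ^ 4 * Real.sin (s * r) ^ 2)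
        + c4 * (r * Real.cos (s * r) * Real.sin (s * r) ^ 3)
        + c5 * (r ^ 3 * Real.cos (s * r) * Real.sin (s * r) ^ 3)
        + c6 * Real.sin (s * r) ^ 4 + c7 * (r ^ 2 * Real.sin (s * r) ^ 4) = 0) :
    c0 = 0 ∧ c1 = 0 ∧ c2 = 0 ∧ c3 = 0 ∧ c4 = 0 ∧ c5 = 0 ∧ c6 = 0 ∧ c7 = 0 := by
  set P : ℝ := 2 * Real.pi / s with hPdef
  have hP : P ≠ 0 := div_ne_zero (by positivity) hs
  have main : ∀ r0 : ℝ,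
      c0 + c3 * Real.sin (s * r0) ^ 2 = 0 ∧
      (c1 + c5 * Real.sin (s * r0) ^ 2) * (Real.cos (s * r0) * Real.sin (s * r0)) = 0 ∧
      (c2 + c7 * Real.sin (s * r0) ^ 2) * Real.sin (s * r0) ^ 2 = 0 ∧
      c4 * ((Real.cos (s * r0) * Real.sin (s * r0)) * Real.sin (s * r0) ^ 2) = 0 ∧
      c6 * (Real.sin (s * r0) ^ 2) ^ 2 = 0 := by
    intro r0
    have e : ∀ n : ℕ,
        (c0 + c3 * Real.sin (s * r0) ^ 2) * (r0 + n * P) ^ 4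
          + ((c1 + c5 * Real.sin (s * r0) ^ 2) * (Real.cos (s * r0) * Real.sin (s * r0)))
              * (r0 + n * P) ^ 3
          + ((c2 + c7 * Real.sin (s * r0) ^ 2) * Real.sin (s * r0) ^ 2) * (r0 + n * P) ^ 2
          + (c4 * ((Real.cos (s * r0) * Real.sin (s * r0)) * Real.sin (s * r0) ^ 2))
              * (r0 + n * P)
          + c6 * (Real.sin (s * r0) ^ 2) ^ 2 = 0 := by
      intro n
      have h := hF (r0 + n * P)
      have harg : s * (r0 + n * P) = s * r0 + n * (2 * Real.pi) := by
        rw [hPdef]; field_simp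
      rw [harg, Real.sin_add_nat_mul_two_pi, Real.cos_add_nat_mul_two_pi] at h
      linear_combination h
    have h0 := e 0
    have h1 := e 1
    have h2 := e 2
    have h3 := e 3
    have h4 := e 4
    push_cast at h0 h1 h2 h3 h4
    exact quartic_coeffs _ _ _ _ _ r0 P hP (by linear_combination h0) (by linear_combination h1)
      (by linear_combination h2) (by linear_combination h3) (by linear_combination h4)
  -- evaluate at base points `π/(4s)` and `π/(6s)`
  have h4s : s * (Real.pi / (4 * s)) = Real.pi / 4 := by field_simp
  have h6s : s * (Real.pi / (6 * s)) = Real.pi / 6 := by field_simp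
  obtain ⟨A1, B1, C1, D1, E1⟩ := main (Real.pi / (4 * s))
  obtain ⟨A2, B2, C2, -, -⟩ := main (Real.pi / (6 * s))
  have hsin4 : Real.sin (Real.pi / 4) ^ 2 = 1 / 2 := by
    rw [Real.sin_pi_div_four, div_pow, Real.sq_sqrt (by norm_num : (2:ℝ) ≥ 0)]; norm_num
  have hcs4 : Real.cos (Real.pi / 4) * Real.sin (Real.pi / 4) = 1 / 2 := by
    rw [Real.cos_pi_div_four, Real.sin_pi_div_four, div_mul_div_comm,
      Real.mul_self_sqrt (by norm_num : (2:ℝ) ≥ 0)]; norm_num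
  have hsin6 : Real.sin (Real.pi / 6) ^ 2 = 1 / 4 := by
    rw [Real.sin_pi_div_six]; norm_num
  have hcs6 : Real.cos (Real.pi / 6) * Real.sin (Real.pi / 6) = Real.sqrt 3 / 4 := by
    rw [Real.cos_pi_div_six, Real.sin_pi_div_six]; ring
  have hs3 : Real.sqrt 3 ≠ 0 := by positivity
  simp only [h4s, hsin4, hcs4] at A1 B1 C1 D1 E1
  simp only [h6s, hsin6, hcs6] at A2 B2 C2
  -- extract the individual coefficients
  have hc4 : c4 = 0 := by linarith
  have hc6 : c6 = 0 := by linarith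
  have hB1' : c1 + c5 * (1 / 2) = 0 := by linarith
  have hB2' : c1 + c5 * (1 / 4) = 0 := by
    have := mul_eq_zero.mp B2
    rcases this with h | h
    · exact h
    · exact absurd h (by positivity)
  have hC1' : c2 + c7 * (1 / 2) = 0 := by linarith
  have hC2' : c2 + c7 * (1 / 4) = 0 := by linarith
  refine ⟨by linarith, by linarith, by linarith, by linarith, hc4, by linarith, hc6, by linarith⟩

/-- For `k > 0`, the eight functions `r⁴`, `r³ C_k S_k`, `r² S_k²`,
`r⁴ S_k²`, `r C_k S_k³`, `r³ C_k S_k³`, `S_k⁴`, `r² S_k⁴` on the interval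
`(0, π/√k)` are linearly independent over `ℝ`. -/
theorem stmt_13 (k : ℝ) (hk : 0 < k) :
    LinearIndependent ℝ
      (![fun x : Set.Ioo (0 : ℝ) (Real.pi / Real.sqrt k) => (x : ℝ) ^ 4,
         fun x => (x : ℝ) ^ 3 * Ck k x * Sk k x,
         fun x => (x : ℝ) ^ 2 * Sk k x ^ 2,
         fun x => (x : ℝ) ^ 4 * Sk k x ^ 2,
         fun x => (x : ℝ) * Ck k x * Sk k x ^ 3,
         fun x => (x : ℝ) ^ 3 * Ck k x * Sk k x ^ 3,
         fun x => Sk k x ^ 4,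
         fun x => (x : ℝ) ^ 2 * Sk k x ^ 4] :
        Fin 8 → (Set.Ioo (0 : ℝ) (Real.pi / Real.sqrt k) → ℝ)) := by
  have hs0 : 0 < Real.sqrt k := Real.sqrt_pos.mpr hk
  set s : ℝ := Real.sqrt k with hsdef
  have hsne : s ≠ 0 := ne_of_gt hs0
  rw [Fintype.linearIndependent_iff]
  intro g hg
  set F : ℝ → ℝ := fun r =>
    g 0 * r ^ 4 + (g 1 / s) * (r ^ 3 * Real.cos (s * r) * Real.sin (s * r))
      + (g 2 / s ^ 2) * (r ^ 2 * Real.sin (s * r) ^ 2)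
      + (g 3 / s ^ 2) * (r ^ 4 * Real.sin (s * r) ^ 2)
      + (g 4 / s ^ 3) * (r * Real.cos (s * r) * Real.sin (s * r) ^ 3)
      + (g 5 / s ^ 3) * (r ^ 3 * Real.cos (s * r) * Real.sin (s * r) ^ 3)
      + (g 6 / s ^ 4) * Real.sin (s * r) ^ 4
      + (g 7 / s ^ 4) * (r ^ 2 * Real.sin (s * r) ^ 4) with hFdef
  have hFIoo : ∀ r ∈ Set.Ioo (0 : ℝ) (Real.pi / s), F r = 0 := by
    intro r hr
    have h := congrFun hg ⟨r, hr⟩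
    simp only [Fin.sum_univ_succ, Fin.sum_univ_zero, Matrix.cons_val_zero, Matrix.cons_val_succ,
      Pi.add_apply, Pi.smul_apply, smul_eq_mul, Pi.zero_apply, add_zero,
      Sk, Ck, if_pos hk] at h
    rw [← hsdef] at h
    have h' : g 0 * r ^ 4 +
        (g 1 * (r ^ 3 * Real.cos (s * r) * (Real.sin (s * r) / s)) +
        (g 2 * (r ^ 2 * (Real.sin (s * r) / s) ^ 2) +
        (g 3 * (r ^ 4 * (Real.sin (s * r) / s) ^ 2) +
        (g 4 * (r * Real.cos (s * r) * (Real.sin (s * r) / s) ^ 3) +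
        (g 5 * (r ^ 3 * Real.cos (s * r) * (Real.sin (s * r) / s) ^ 3) +
        (g 6 * (Real.sin (s * r) / s) ^ 4 +
         g 7 * (r ^ 2 * (Real.sin (s * r) / s) ^ 4))))))) = 0 := h
    simp only [hFdef]
    linear_combination h'
  have hFanal : AnalyticOnNhd ℝ F Set.univ := by
    intro x _
    have hsin := analyticAt_rsin s x
    have hcos := analyticAt_rcos s x
    have hid : AnalyticAt ℝ (fun r : ℝ => r) x := analyticAt_id
    exact ((((((((analyticAt_const.mul (hid.pow 4)).add
      (analyticAt_const.mul (((hid.pow 3).mul hcos).mul hsin))).add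
      (analyticAt_const.mul ((hid.pow 2).mul (hsin.pow 2)))).add
      (analyticAt_const.mul ((hid.pow 4).mul (hsin.pow 2)))).add
      (analyticAt_const.mul ((hid.mul hcos).mul (hsin.pow 3)))).add
      (analyticAt_const.mul (((hid.pow 3).mul hcos).mul (hsin.pow 3)))).add
      (analyticAt_const.mul (hsin.pow 4))).add
      (analyticAt_const.mul ((hid.pow 2).mul (hsin.pow 4))))
  have hx0 : ((Real.pi / s) / 2) ∈ Set.Ioo (0 : ℝ) (Real.pi / s) := by
    constructor
    · positivity
    · have : 0 < Real.pi / s := by positivity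
      linarith
  have hev : F =ᶠ[nhds ((Real.pi / s) / 2)] 0 :=
    Filter.eventuallyEq_of_mem (isOpen_Ioo.mem_nhds hx0) (fun y hy => hFIoo y hy)
  have hF0 : ∀ r : ℝ, F r = 0 := by
    have := hFanal.eqOn_zero_of_preconnected_of_eventuallyEq_zero isPreconnected_univ
      (Set.mem_univ ((Real.pi / s) / 2)) hev
    exact fun r => this (Set.mem_univ r)
  obtain ⟨e0, e1, e2, e3, e4, e5, e6, e7⟩ :=
    key_lemma (g 0) (g 1 / s) (g 2 / s ^ 2) (g 3 / s ^ 2) (g 4 / s ^ 3) (g 5 / s ^ 3)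
      (g 6 / s ^ 4) (g 7 / s ^ 4) s hsne (by intro r; exact hF0 r)
  intro i
  fin_cases i
  · exact e0
  · exact (div_eq_zero_iff.mp e1).resolve_right hsne
  · exact (div_eq_zero_iff.mp e2).resolve_right (pow_ne_zero _ hsne)
  · exact (div_eq_zero_iff.mp e3).resolve_right (pow_ne_zero _ hsne)
  · exact (div_eq_zero_iff.mp e4).resolve_right (pow_ne_zero _ hsne)
  · exact (div_eq_zero_iff.mp e5).resolve_right (pow_ne_zero _ hsne)
  · exact (div_eq_zero_iff.mp e6).resolve_right (pow_ne_zero _ hsne)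
  · exact (div_eq_zero_iff.mp e7).resolve_right (pow_ne_zero _ hsne)
end
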